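/- The function m ↦ 2E(m)/K(m) − 1 is strictly decreasing on (0,1) and maps (0,1) bijectively onto (−1,1). -/

import Mathlib

/-! The integrand of `E` decreases and that of `K` increases with `m`, strictly at `θ = π / 2`,
so `E / K` is strictly decreasing; `E < K` because `√x < 1 / √x` for `0 < x < 1`, which puts the
values in `(-1, 1)`. At `m = 0` the function equals `1` and is continuous there. Near `m = 1`,
the bound `√(1 - m sin²θ) ≤ π / 2 - θ + √(1 - m)` gives `K m ≥ -log (1 - m) / 2 → ∞` while `E`
stays bounded, so the function tends to `-1`; the intermediate value theorem gives surjectivity. -/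

open Real

noncomputable def ellK (m : ℝ) : ℝ :=
  ∫ θ in (0:ℝ)..(π / 2), 1 / Real.sqrt (1 - m * Real.sin θ ^ 2)

noncomputable def ellE (m : ℝ) : ℝ :=
  ∫ θ in (0:ℝ)..(π / 2), Real.sqrt (1 - m * Real.sin θ ^ 2)

open Set Filter Topology intervalIntegral MeasureTheory

theorem ContinuousOn.surjOn_Ioo_of_tendsto {α δ : Type*} [ConditionallyCompleteLinearOrder α]
    [TopologicalSpace α] [OrderTopology α] [DenselyOrdered α] [LinearOrder δ]
    [TopologicalSpace δ] [OrderClosedTopology δ] {f : α → δ} {a b : α} {l u : δ} (hab : a < b)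
    (hf : ContinuousOn f (Ioo a b)) (ha : Tendsto f (𝓝[>] a) (𝓝 u))
    (hb : Tendsto f (𝓝[<] b) (𝓝 l)) : SurjOn f (Ioo a b) (Ioo l u) := by
  intro y hy
  have := nhdsGT_neBot_of_exists_gt ⟨b, hab⟩
  have := nhdsLT_neBot_of_exists_lt ⟨a, hab⟩
  obtain ⟨x₁, hfx₁, hx₁⟩ :=
    ((ha.eventually (eventually_gt_nhds hy.2)).and (Ioo_mem_nhdsGT hab)).exists
  obtain ⟨x₂, hfx₂, hx₂⟩ :=
    ((hb.eventually (eventually_lt_nhds hy.1)).and (Ioo_mem_nhdsLT hab)).exists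
  exact hf.surjOn_Icc hx₂ hx₁ ⟨hfx₂.le, hfx₁.le⟩

lemma one_sub_mul_sin_sq_pos {m : ℝ} (hm : m < 1) (θ : ℝ) : 0 < 1 - m * sin θ ^ 2 := by
  rcases le_or_gt m 0 with h | h
  · nlinarith [sq_nonneg (sin θ)]
  · nlinarith [sin_sq_le_one θ]

lemma one_sub_mul_sin_sq_le_of_le {m₁ m₂ : ℝ} (h : m₁ ≤ m₂) (θ : ℝ) :
    1 - m₂ * sin θ ^ 2 ≤ 1 - m₁ * sin θ ^ 2 := by
  nlinarith [sq_nonneg (sin θ)]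

lemma continuous_ellK_integrand {m : ℝ} (hm : m < 1) :
    Continuous fun θ => 1 / √(1 - m * sin θ ^ 2) :=
  continuous_const.div (by fun_prop) fun θ => (sqrt_pos.2 (one_sub_mul_sin_sq_pos hm θ)).ne'

/-- `1 - m sin²θ = cos²θ + (1 - m) sin²θ` and `cos θ = sin (π / 2 - θ) ≤ π / 2 - θ`. -/
lemma sqrt_one_sub_mul_sin_sq_le {m θ : ℝ} (hm : m ≤ 1) (hθ : θ ∈ Icc 0 (π / 2)) :
    √(1 - m * sin θ ^ 2) ≤ π / 2 + √(1 - m) - θ := by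
  have hcos : cos θ ≤ π / 2 - θ := by
    simpa only [sin_pi_div_two_sub] using sin_le (sub_nonneg.2 hθ.2)
  have hcos0 : 0 ≤ cos θ := cos_nonneg_of_mem_Icc ⟨by linarith [hθ.1, pi_pos], hθ.2⟩
  have hc := sq_sqrt (sub_nonneg.2 hm)
  have hc0 := sqrt_nonneg (1 - m)
  rw [sqrt_le_left (by linarith [hθ.2])]
  nlinarith [sin_sq_add_cos_sq θ, sin_sq_le_one θ, mul_le_mul hcos hcos hcos0 (by linarith),
    mul_nonneg hc0 (sub_nonneg.2 hθ.2)]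

lemma ellE_pos {m : ℝ} (hm : m < 1) : 0 < ellE m :=
  intervalIntegral_pos_of_pos (Continuous.intervalIntegrable (by fun_prop) _ _)
    (fun θ => sqrt_pos.2 (one_sub_mul_sin_sq_pos hm θ)) (by positivity)

lemma ellK_pos {m : ℝ} (hm : m < 1) : 0 < ellK m :=
  intervalIntegral_pos_of_pos ((continuous_ellK_integrand hm).intervalIntegrable _ _)
    (fun θ => one_div_pos.2 (sqrt_pos.2 (one_sub_mul_sin_sq_pos hm θ))) (by positivity)

lemma ellE_zero : ellE 0 = π / 2 := by simp [ellE]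

lemma ellK_zero : ellK 0 = π / 2 := by simp [ellK]

lemma ellE_strictAntiOn : StrictAntiOn ellE (Iic 1) := by
  intro m₁ _ m₂ hm₂ h
  refine integral_lt_integral_of_continuousOn_of_le_of_exists_lt (by positivity)
    (Continuous.continuousOn (by fun_prop)) (Continuous.continuousOn (by fun_prop))
    (fun θ _ => sqrt_le_sqrt (one_sub_mul_sin_sq_le_of_le h.le θ))
    ⟨π / 2, ⟨by positivity, le_rfl⟩, ?_⟩
  rw [sin_pi_div_two, one_pow, mul_one, mul_one,
    sqrt_lt_sqrt_iff_of_pos (by linarith [mem_Iic.1 hm₂])]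
  linarith

lemma ellK_strictMonoOn : StrictMonoOn ellK (Iio 1) := by
  intro m₁ hm₁ m₂ hm₂ h
  have hpos := one_sub_mul_sin_sq_pos (mem_Iio.1 hm₂)
  refine integral_lt_integral_of_continuousOn_of_le_of_exists_lt (by positivity)
    (continuous_ellK_integrand hm₁).continuousOn (continuous_ellK_integrand hm₂).continuousOn
    (fun θ _ => one_div_le_one_div_of_le (sqrt_pos.2 (hpos θ))
      (sqrt_le_sqrt (one_sub_mul_sin_sq_le_of_le h.le θ)))
    ⟨π / 2, ⟨by positivity, le_rfl⟩, one_div_lt_one_div_of_lt (sqrt_pos.2 (hpos _))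
      (sqrt_lt_sqrt (hpos _).le ?_)⟩
  rw [sin_pi_div_two, one_pow, mul_one, mul_one]
  linarith

lemma strictAntiOn_ellE_div_ellK : StrictAntiOn (fun m => ellE m / ellK m) (Iio 1) :=
  fun _ hm₁ _ hm₂ h =>
    div_lt_div₀ (ellE_strictAntiOn (mem_Iic_of_Iio hm₁) (mem_Iic_of_Iio hm₂) h)
      (ellK_strictMonoOn hm₁ hm₂ h).le (ellE_pos hm₁).le (ellK_pos hm₁)

lemma ellE_lt_ellK {m : ℝ} (h0 : 0 < m) (h1 : m < 1) : ellE m < ellK m := by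
  have hle {x : ℝ} (hx : 0 < x) (hx1 : x ≤ 1) : √x ≤ 1 / √x := by
    rwa [le_div_iff₀ (sqrt_pos.2 hx), mul_self_sqrt hx.le]
  have hlt {x : ℝ} (hx : 0 < x) (hx1 : x < 1) : √x < 1 / √x := by
    rwa [lt_div_iff₀ (sqrt_pos.2 hx), mul_self_sqrt hx.le]
  have hpos := one_sub_mul_sin_sq_pos h1
  refine integral_lt_integral_of_continuousOn_of_le_of_exists_lt (by positivity)
    (Continuous.continuousOn (by fun_prop)) (continuous_ellK_integrand h1).continuousOn
    (fun θ _ => hle (hpos θ) (by nlinarith [sq_nonneg (sin θ)]))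
    ⟨π / 2, ⟨by positivity, le_rfl⟩, hlt (hpos _) ?_⟩
  rw [sin_pi_div_two, one_pow, mul_one]
  linarith

lemma continuous_ellE : Continuous ellE :=
  continuous_parametric_intervalIntegral_of_continuous' (by fun_prop) 0 (π / 2)

lemma continuousOn_ellK : ContinuousOn ellK (Iio 1) := by
  rw [continuousOn_iff_continuous_domRestrict]
  refine continuous_parametric_intervalIntegral_of_continuous' (μ := volume) ?_ 0 (π / 2)
  exact continuous_const.div (by fun_prop)
    fun p => (sqrt_pos.2 (one_sub_mul_sin_sq_pos p.1.2 p.2)).ne'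

lemma neg_log_one_sub_div_two_le_ellK {m : ℝ} (hm : m < 1) : -log (1 - m) / 2 ≤ ellK m := by
  set c := √(1 - m)
  have hc : 0 < c := sqrt_pos.2 (sub_pos.2 hm)
  have hint : ∫ θ in (0:ℝ)..π / 2, 1 / (π / 2 + c - θ) = log ((π / 2 + c) / c) := by
    rw [integral_comp_sub_left (fun x => 1 / x), sub_zero, add_sub_cancel_left,
      integral_one_div_of_pos hc (by positivity)]
  calc -log (1 - m) / 2 = log (1 / c) := by
        rw [one_div, log_inv, log_sqrt (sub_pos.2 hm).le]; ring
    _ ≤ log ((π / 2 + c) / c) := log_le_log (by positivity) (by gcongr; linarith [pi_gt_three])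
    _ = ∫ θ in (0:ℝ)..π / 2, 1 / (π / 2 + c - θ) := hint.symm
    _ ≤ ellK m := by
      refine integral_mono_on (by positivity) ?_
        ((continuous_ellK_integrand hm).intervalIntegrable _ _) fun θ hθ =>
          one_div_le_one_div_of_le (sqrt_pos.2 (one_sub_mul_sin_sq_pos hm θ))
            (sqrt_one_sub_mul_sin_sq_le hm.le hθ)
      refine ContinuousOn.intervalIntegrable (continuousOn_const.div (by fun_prop) fun θ hθ => ?_)
      rw [uIcc_of_le (by positivity)] at hθ
      linarith [hθ.2]

lemma tendsto_ellK_nhdsLT_one : Tendsto ellK (𝓝[<] 1) atTop := by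
  have h1 : Tendsto (fun m : ℝ => 1 - m) (𝓝[<] 1) (𝓝[>] 0) :=
    tendsto_nhdsWithin_iff.2 ⟨((continuous_sub_left (1:ℝ)).tendsto' 1 0 (sub_self 1)).mono_left
      nhdsWithin_le_nhds, eventually_nhdsWithin_of_forall fun _ hm => mem_Ioi.2 (sub_pos.2 hm)⟩
  refine tendsto_atTop_mono' _ (eventually_nhdsWithin_of_forall
    fun m hm => neg_log_one_sub_div_two_le_ellK hm) ?_
  exact (tendsto_neg_atBot_atTop.comp (tendsto_log_nhdsGT_zero.comp h1)).atTop_div_const two_pos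

theorem twoEoverK_strictAnti_bij :
    StrictAntiOn (fun m => 2 * ellE m / ellK m - 1) (Set.Ioo (0:ℝ) 1) ∧
    Set.BijOn (fun m => 2 * ellE m / ellK m - 1)
      (Set.Ioo (0:ℝ) 1) (Set.Ioo (-1 : ℝ) 1) := by
  have hanti : StrictAntiOn (fun m => 2 * ellE m / ellK m - 1) (Ioo 0 1) :=
    fun m₁ hm₁ m₂ hm₂ h => by
      have := strictAntiOn_ellE_div_ellK hm₁.2 hm₂.2 h
      simp only [mul_div_assoc]
      linarith
  have hcont : ContinuousOn (fun m => 2 * ellE m / ellK m - 1) (Iio 1) :=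
    ((continuousOn_const.mul continuous_ellE.continuousOn).div continuousOn_ellK
      fun m hm => (ellK_pos hm).ne').sub continuousOn_const
  have hzero : Tendsto (fun m => 2 * ellE m / ellK m - 1) (𝓝[>] 0) (𝓝 1) := by
    convert (hcont.continuousAt (Iio_mem_nhds one_pos)).tendsto.mono_left nhdsWithin_le_nhds
    rw [ellE_zero, ellK_zero, mul_div_cancel_right₀ _ (by positivity)]
    norm_num
  have hone : Tendsto (fun m => 2 * ellE m / ellK m - 1) (𝓝[<] 1) (𝓝 (-1)) := by
    have := ((((continuous_ellE.tendsto 1).const_mul 2).mono_left nhdsWithin_le_nhds).div_atTop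
      tendsto_ellK_nhdsLT_one).sub_const 1
    rwa [zero_sub] at this
  refine ⟨hanti, fun m hm => ?_, hanti.injOn,
    (hcont.mono fun m hm => hm.2).surjOn_Ioo_of_tendsto one_pos hzero hone⟩
  have hK := ellK_pos hm.2
  constructor
  · have : 0 < 2 * ellE m / ellK m := div_pos (by linarith [ellE_pos hm.2]) hK
    linarith
  · have : 2 * ellE m / ellK m < 2 := by
      rw [div_lt_iff₀ hK]
      linarith [ellE_lt_ellK hm.1 hm.2]
    linarith
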